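/- arXiv:2512.14999 — 7 statements merged into one kernel-verified Lean document; each statement's English description precedes it below -/
import Mathlib

section
/- Let λ₀^A ≤ λ₁^A, λ₀^B ≤ λ₁^B, λ₀ ≤ λ₁ ≤ λ₂ ≤ λ₃ be real numbers with λ₀^A+λ₁^A = 1, λ₀^B+λ₁^B = 1, λ₀+λ₁+λ₂+λ₃ = 1, satisfying λ₀^A+λ₀^B ≥ 2λ₀+λ₁+λ₂. Then for any E > 0, 2√2·E·(λ₁^A−λ₀^A) + 2√2·E·(λ₁^B−λ₀^B) ≤ 4√2·E·(λ₃−λ₀), with equality iff λ₃ − λ₀ = λ₁^A + λ₁^B − 1. -/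
/-- Two-qubit battery capacity trade-off for the transverse non-interacting field,
with the equality condition. -/
theorem stmt_1
    (l0A l1A l0B l1B l0 l1 l2 l3 E : ℝ) (hE : 0 < E)
    (hA : l0A ≤ l1A) (hB : l0B ≤ l1B)
    (h01 : l0 ≤ l1) (h12 : l1 ≤ l2) (h23 : l2 ≤ l3)
    (hsumA : l0A + l1A = 1) (hsumB : l0B + l1B = 1)
    (hsum : l0 + l1 + l2 + l3 = 1)
    (hm3 : l0A + l0B ≥ 2 * l0 + l1 + l2) :
    2 * Real.sqrt 2 * E * (l1A - l0A) + 2 * Real.sqrt 2 * E * (l1B - l0B)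
      ≤ 4 * Real.sqrt 2 * E * (l3 - l0)
    ∧ (2 * Real.sqrt 2 * E * (l1A - l0A) + 2 * Real.sqrt 2 * E * (l1B - l0B)
        = 4 * Real.sqrt 2 * E * (l3 - l0) ↔ l3 - l0 = l1A + l1B - 1) := by
  have hs : 0 < Real.sqrt 2 := by positivity
  have hc : 0 < 4 * Real.sqrt 2 * E := by positivity
  have hlhs : 2 * Real.sqrt 2 * E * (l1A - l0A) + 2 * Real.sqrt 2 * E * (l1B - l0B)
      = 4 * Real.sqrt 2 * E * (l1A + l1B - 1) := by
    have h1 : l0A = 1 - l1A := by linarith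
    have h2 : l0B = 1 - l1B := by linarith
    rw [h1, h2]; ring
  have hkey : l1A + l1B - 1 ≤ l3 - l0 := by linarith
  constructor
  · rw [hlhs]
    exact mul_le_mul_of_nonneg_left hkey hc.le
  · rw [hlhs]
    constructor
    · intro h
      have := mul_left_cancel₀ (ne_of_gt hc) h
      linarith
    · intro h; rw [h]
end

section
/- For any two-qubit density matrix ρ with diagonal entries having ascending ordering μ₁ ≤ μ₂ ≤ μ₃ ≤ μ₄, let τ = diag(ρ₁₁,...,ρ₄₄) and τ̃ = diag(μ₄, μ₃, μ₂, μ₁). Then (μ₄+μ₃−μ₂−μ₁) + (μ₄+μ₂−μ₃−μ₁) ≥ |ρ₁₁+ρ₂₂−ρ₃₃−ρ₄₄| + |ρ₁₁+ρ₃₃−ρ₂₂−ρ₄₄|. Consequently, permuting the diagonal into descending order never decreases the incoherent part Sub_ic of the subsystems' battery capacities. -/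
/-- Sorting the diagonal of a two-qubit density matrix into descending order never
decreases the incoherent part of the subsystems' battery capacities. -/
theorem stmt_6
    (d1 d2 d3 d4 m1 m2 m3 m4 : ℝ)
    (hd1 : 0 ≤ d1) (hd2 : 0 ≤ d2) (hd3 : 0 ≤ d3) (hd4 : 0 ≤ d4)
    (hsum : d1 + d2 + d3 + d4 = 1)
    (h12 : m1 ≤ m2) (h23 : m2 ≤ m3) (h34 : m3 ≤ m4)
    (hperm : ({m1, m2, m3, m4} : Multiset ℝ) = {d1, d2, d3, d4}) :
    |d1 + d2 - d3 - d4| + |d1 + d3 - d2 - d4|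
      ≤ (m4 + m3 - m2 - m1) + (m4 + m2 - m3 - m1)
    ∧ ∀ g : ℝ, 0 ≤ g →
        g * |d1 + d2 - d3 - d4| + g * |d1 + d3 - d2 - d4|
          ≤ g * (m4 + m3 - m2 - m1) + g * (m4 + m2 - m3 - m1) := by
  have hmem : ∀ x ∈ ({d1, d2, d3, d4} : Multiset ℝ), m1 ≤ x ∧ x ≤ m4 := by
    intro x hx
    rw [← hperm] at hx
    simp only [Multiset.insert_eq_cons, Multiset.mem_cons, Multiset.mem_singleton] at hx
    rcases hx with h | h | h | h <;> subst h <;> constructor <;> linarith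
  have h1 := hmem d1 (by simp)
  have h2 := hmem d2 (by simp)
  have h3 := hmem d3 (by simp)
  have h4 := hmem d4 (by simp)
  have key : |d1 + d2 - d3 - d4| + |d1 + d3 - d2 - d4|
      ≤ (m4 + m3 - m2 - m1) + (m4 + m2 - m3 - m1) := by
    rcases abs_cases (d1 + d2 - d3 - d4) with ⟨e1, _⟩ | ⟨e1, _⟩ <;>
      rcases abs_cases (d1 + d3 - d2 - d4) with ⟨e2, _⟩ | ⟨e2, _⟩ <;>
      rw [e1, e2] <;>
      obtain ⟨h1a, h1b⟩ := h1 <;> obtain ⟨h2a, h2b⟩ := h2 <;>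
      obtain ⟨h3a, h3b⟩ := h3 <;> obtain ⟨h4a, h4b⟩ := h4 <;> linarith
  refine ⟨key, fun g hg => ?_⟩
  calc g * |d1 + d2 - d3 - d4| + g * |d1 + d3 - d2 - d4|
      = g * (|d1 + d2 - d3 - d4| + |d1 + d3 - d2 - d4|) := by ring
    _ ≤ g * ((m4 + m3 - m2 - m1) + (m4 + m2 - m3 - m1)) :=
        mul_le_mul_of_nonneg_left key hg
    _ = g * (m4 + m3 - m2 - m1) + g * (m4 + m2 - m3 - m1) := by ring
end

section
/- Suppose a global unitary U on a two-qubit state ρ produces ρ̃ = UρU† whose dephased reduced states τ̃_A, τ̃_B have largest eigenvalues ξ₁^A, ξ₁^B satisfying ξ₁^A + ξ₁^B > λ₁^A + λ₁^B, where λ₁^A, λ₁^B are the largest eigenvalues of ρ_A, ρ_B. If the two subsystem Hamiltonians have equal level gaps, then C(ρ̃_A;H_A) + C(ρ̃_B;H_B) > C(ρ_A;H_A) + C(ρ_B;H_B). -/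
open Matrix
open scoped ComplexOrder

/-- Partial trace over the second qubit. -/
def trB (ρ : Matrix (Fin 4) (Fin 4) ℂ) : Matrix (Fin 2) (Fin 2) ℂ :=
  !![ρ 0 0 + ρ 1 1, ρ 0 2 + ρ 1 3;
     ρ 2 0 + ρ 3 1, ρ 2 2 + ρ 3 3]

/-- Partial trace over the first qubit. -/
def trA (ρ : Matrix (Fin 4) (Fin 4) ℂ) : Matrix (Fin 2) (Fin 2) ℂ :=
  !![ρ 0 0 + ρ 2 2, ρ 0 1 + ρ 2 3;
     ρ 1 0 + ρ 3 2, ρ 1 1 + ρ 3 3]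

/-- The largest eigenvalue of a Hermitian matrix. -/
noncomputable def maxEig {n : ℕ} {M : Matrix (Fin n) (Fin n) ℂ}
    (hM : M.IsHermitian) : ℝ := ⨆ i, hM.eigenvalues i

lemma diag_le_maxEig {n : ℕ} [NeZero n] {M : Matrix (Fin n) (Fin n) ℂ}
    (hM : M.IsHermitian) (i : Fin n) : (M i i).re ≤ maxEig hM := by
  set V : Matrix (Fin n) (Fin n) ℂ := (hM.eigenvectorUnitary : Matrix (Fin n) (Fin n) ℂ) with hV
  have hspec := hM.spectral_theorem
  have hdiag : M i i = ∑ j, (hM.eigenvalues j : ℂ) * (V i j * star (V i j)) := by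
    conv_lhs => rw [hspec]
    simp [Matrix.mul_apply, Matrix.conjTranspose_apply, Matrix.star_apply,
      Matrix.diagonal_apply, Finset.sum_ite_eq', hV, mul_comm, mul_left_comm, mul_assoc]
  have hnorm : ∑ j, Complex.normSq (V i j) = 1 := by
    have h1 : (V * star V) i i = 1 := by
      rw [(Matrix.mem_unitaryGroup_iff).mp hM.eigenvectorUnitary.2]
      simp
    have : ∑ j, V i j * star (V i j) = 1 := by
      simpa [Matrix.mul_apply, Matrix.star_apply] using h1
    have := congrArg Complex.re this
    simpa [Complex.mul_conj] using this
  have hre : (M i i).re = ∑ j, hM.eigenvalues j * Complex.normSq (V i j) := by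
    rw [hdiag, Complex.re_sum]
    congr 1; ext j
    simp [Complex.mul_conj]
  have hbd : BddAbove (Set.range hM.eigenvalues) := Set.Finite.bddAbove (Set.finite_range _)
  have hle : ∀ j, hM.eigenvalues j * Complex.normSq (V i j)
      ≤ maxEig hM * Complex.normSq (V i j) := fun j =>
    mul_le_mul_of_nonneg_right (le_ciSup hbd j) (Complex.normSq_nonneg _)
  calc (M i i).re = ∑ j, hM.eigenvalues j * Complex.normSq (V i j) := hre
    _ ≤ ∑ j, maxEig hM * Complex.normSq (V i j) := Finset.sum_le_sum fun j _ => hle j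
    _ = maxEig hM := by rw [← Finset.mul_sum, hnorm, mul_one]

/-- Sufficient condition for subsystem capacity gain: if the largest eigenvalues of
the dephased reduced states of `ρ̃ = UρU†` outsum the largest eigenvalues of the
reduced states of `ρ`, then the subsystem capacities strictly increase
(subsystem Hamiltonians with equal level gap `g > 0`). -/
theorem stmt_8
    (ρ U : Matrix (Fin 4) (Fin 4) ℂ)
    (hU : U ∈ Matrix.unitaryGroup (Fin 4) ℂ)
    (hpos : ρ.PosSemidef) (htr : ρ.trace = 1)
    (hA : (trB ρ).IsHermitian) (hB : (trA ρ).IsHermitian)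
    (hA' : (trB (U * ρ * Uᴴ)).IsHermitian)
    (hB' : (trA (U * ρ * Uᴴ)).IsHermitian)
    -- the largest eigenvalues of the dephased reduced states of ρ̃ are the
    -- largest diagonal entries; assume they outsum those of ρ_A, ρ_B :
    (hgain : max ((trB (U * ρ * Uᴴ)) 0 0).re ((trB (U * ρ * Uᴴ)) 1 1).re
        + max ((trA (U * ρ * Uᴴ)) 0 0).re ((trA (U * ρ * Uᴴ)) 1 1).re
        > maxEig hA + maxEig hB)
    (g : ℝ) (hg : 0 < g) :
    g * (2 * maxEig hA' - 1) + g * (2 * maxEig hB' - 1)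
      > g * (2 * maxEig hA - 1) + g * (2 * maxEig hB - 1) := by
  have h1 : max ((trB (U * ρ * Uᴴ)) 0 0).re ((trB (U * ρ * Uᴴ)) 1 1).re ≤ maxEig hA' :=
    max_le (diag_le_maxEig hA' 0) (diag_le_maxEig hA' 1)
  have h2 : max ((trA (U * ρ * Uᴴ)) 0 0).re ((trA (U * ρ * Uᴴ)) 1 1).re ≤ maxEig hB' :=
    max_le (diag_le_maxEig hB' 0) (diag_le_maxEig hB' 1)
  nlinarith [hgain, hg]
end

section
/- Let ρ_b = (1/2)[[1,0,0,b],[0,0,0,0],[0,0,0,0],[b,0,0,1]] for b ∈ [0,1]. Then both reduced states of ρ_b equal I/2, so each subsystem battery capacity is zero; and after conjugating by the permutation U₃₄ (swapping basis states 3 and 4), the reduced states of ρ̃_b = U₃₄ρ_bU₃₄† have largest eigenvalues (1/2)(1+b) and 1/2·(1) + b/2 respectively, giving Sub(ρ̃_b) = 2 + 2b for the longitudinal-field XX model with E = α = J = 1 (subsystem Hamiltonian level gap 2). -/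
open Matrix
open scoped ComplexOrder

/-- The permutation matrix swapping basis states 3 and 4. -/
def U34 : Matrix (Fin 4) (Fin 4) ℂ :=
  !![1, 0, 0, 0;
     0, 1, 0, 0;
     0, 0, 0, 1;
     0, 0, 1, 0]

/-- The Bell-like state `ρ_b`. -/
noncomputable def rhoBell (b : ℝ) : Matrix (Fin 4) (Fin 4) ℂ :=
  (1 / 2 : ℂ) • !![1, 0, 0, (b : ℂ);
                   0, 0, 0, 0;
                   0, 0, 0, 0;
                   (b : ℂ), 0, 0, 1]

/-!
The swap `U₃₄` turns `ρ_b` into the product state `ρ̃_b = ½ [[1, b], [b, 1]] ⊗ |0⟩⟨0|`,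
so its reduced states are `½ [[1, b], [b, 1]]` and `|0⟩⟨0|`. For a Hermitian `2 × 2` matrix the
eigenvalues are the roots of `λ² - (tr M) λ + det M`, so the largest one is
`(tr M + √((tr M)² - 4 det M)) / 2`, which gives `(1 + b)/2` and `1`.
-/

theorem Real.iSup_fin_two (f : Fin 2 → ℝ) : ⨆ i, f i = max (f 0) (f 1) := by
  apply le_antisymm
  · exact ciSup_le fun i ↦ by fin_cases i <;> simp
  · exact max_le (le_ciSup (Finite.bddAbove_range f) 0) (le_ciSup (Finite.bddAbove_range f) 1)

theorem max_eq_of_add_eq_of_mul_eq {x y s p c : ℝ} (hs : x + y = s) (hp : x * y = p)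
    (hc : 0 ≤ c) (hdisc : s ^ 2 - 4 * p = c ^ 2) : max x y = (s + c) / 2 := by
  have habs : |y - x| = c := by
    rw [← abs_of_nonneg hc, ← sq_eq_sq_iff_abs_eq_abs, ← hdisc, ← hs, ← hp]
    ring
  rw [sup_eq_half_smul_add_add_abs_sub' ℝ, habs, hs, smul_eq_mul]
  ring

theorem maxEig_fin_two {M : Matrix (Fin 2) (Fin 2) ℂ} (hM : M.IsHermitian) {s p c : ℝ}
    (htr : M.trace = s) (hdet : M.det = p) (hc : 0 ≤ c) (hdisc : s ^ 2 - 4 * p = c ^ 2) :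
    maxEig hM = (s + c) / 2 := by
  have hsum : hM.eigenvalues 0 + hM.eigenvalues 1 = s := by
    have := hM.trace_eq_sum_eigenvalues
    rw [htr, Fin.sum_univ_two] at this
    exact Complex.ofReal_injective (by push_cast; exact this.symm)
  have hprod : hM.eigenvalues 0 * hM.eigenvalues 1 = p := by
    have := hM.det_eq_prod_eigenvalues
    rw [hdet, Fin.prod_univ_two] at this
    exact Complex.ofReal_injective (by push_cast; exact this.symm)
  rw [maxEig, Real.iSup_fin_two]
  exact max_eq_of_add_eq_of_mul_eq hsum hprod hc hdisc

theorem U34_conj_rhoBell (b : ℝ) :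
    U34 * rhoBell b * U34ᴴ = (1 / 2 : ℂ) • !![1, 0, (b : ℂ), 0;
                                             0, 0, 0, 0;
                                             (b : ℂ), 0, 1, 0;
                                             0, 0, 0, 0] := by
  ext i j
  fin_cases i <;> fin_cases j <;>
    simp [U34, rhoBell, Matrix.mul_apply, Fin.sum_univ_four, Matrix.conjTranspose_apply]

theorem trB_rhoBell (b : ℝ) : trB (rhoBell b) = (1 / 2 : ℂ) • 1 := by
  ext i j
  fin_cases i <;> fin_cases j <;> simp [trB, rhoBell]

theorem trA_rhoBell (b : ℝ) : trA (rhoBell b) = (1 / 2 : ℂ) • 1 := by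
  ext i j
  fin_cases i <;> fin_cases j <;> simp [trA, rhoBell]

theorem trB_U34_conj_rhoBell (b : ℝ) :
    trB (U34 * rhoBell b * U34ᴴ) = !![1 / 2, (b : ℂ) / 2; (b : ℂ) / 2, 1 / 2] := by
  rw [U34_conj_rhoBell]
  ext i j
  fin_cases i <;> fin_cases j <;> simp [trB] <;> ring

theorem trA_U34_conj_rhoBell (b : ℝ) :
    trA (U34 * rhoBell b * U34ᴴ) = !![1, 0; 0, 0] := by
  rw [U34_conj_rhoBell]
  ext i j
  fin_cases i <;> fin_cases j <;> simp [trA, ← two_mul]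

theorem stmt_9_general
    (b : ℝ) (hb0 : 0 ≤ b)
    (hA : (trB (U34 * rhoBell b * U34ᴴ)).IsHermitian)
    (hB : (trA (U34 * rhoBell b * U34ᴴ)).IsHermitian) :
    trB (rhoBell b) = (1 / 2 : ℂ) • 1
    ∧ trA (rhoBell b) = (1 / 2 : ℂ) • 1
    ∧ maxEig hA = (1 + b) / 2
    ∧ maxEig hB = 1
    ∧ 2 * (2 * maxEig hA - 1) + 2 * (2 * maxEig hB - 1) = 2 + 2 * b := by
  have hmaxA : maxEig hA = (1 + b) / 2 :=
    maxEig_fin_two hA (p := (1 - b ^ 2) / 4)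
      (by rw [trB_U34_conj_rhoBell, Matrix.trace_fin_two_of]; norm_num)
      (by rw [trB_U34_conj_rhoBell, Matrix.det_fin_two_of]; push_cast; ring) hb0 (by ring)
  have hmaxB : maxEig hB = 1 :=
    (maxEig_fin_two hB (s := 1) (p := 0) (c := 1)
      (by rw [trA_U34_conj_rhoBell, Matrix.trace_fin_two_of]; norm_num)
      (by rw [trA_U34_conj_rhoBell, Matrix.det_fin_two_of]; norm_num) zero_le_one
      (by norm_num)).trans (by norm_num)
  exact ⟨trB_rhoBell b, trA_rhoBell b, hmaxA, hmaxB, by rw [hmaxA, hmaxB]; ring⟩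

/-- For the Bell-like family `ρ_b` both reduced states are maximally mixed (zero
subsystem capacity), while after conjugation by `U₃₄` the reduced states have
largest eigenvalues `(1+b)/2` and `1`, giving total subsystem capacity `2 + 2b`
(subsystem Hamiltonian level gap 2). -/
theorem stmt_9
    (b : ℝ) (hb0 : 0 ≤ b) (hb1 : b ≤ 1)
    (hA : (trB (U34 * rhoBell b * U34ᴴ)).IsHermitian)
    (hB : (trA (U34 * rhoBell b * U34ᴴ)).IsHermitian) :
    trB (rhoBell b) = (1 / 2 : ℂ) • 1
    ∧ trA (rhoBell b) = (1 / 2 : ℂ) • 1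
    ∧ maxEig hA = (1 + b) / 2
    ∧ maxEig hB = 1
    ∧ 2 * (2 * maxEig hA - 1) + 2 * (2 * maxEig hB - 1) = 2 + 2 * b :=
  stmt_9_general b hb0 hA hB
end

section
/- For any real numbers λ₀ ≤ λ₁ ≤ λ₂ ≤ λ₃ with Σλᵢ = 1, λ₀ ≥ 0, and parameters E > 0, J > 0, α with 0 < |α| ≤ 1: 4√2E(λ₃−λ₀) ≤ 2√(8E² + J²(α−1)²)·(λ₃−λ₀) + (ε₂−ε₁)(λ₂−λ₁), where {ε₀ ≤ ε₁ ≤ ε₂ ≤ ε₃} is the ascending ordering of {J, −J−2αJ, αJ−√(8E²+J²(α−1)²), αJ+√(8E²+J²(α−1)²)}. That is, the capacity of any two-qubit state under the transverse-field XXZ Hamiltonian is at least its capacity under the interaction-free transverse field H₀. -/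
/-- The battery capacity of any two-qubit state under the transverse-field XXZ
Hamiltonian is at least its capacity under the interaction-free transverse field. -/
theorem stmt_16
    (l0 l1 l2 l3 E J α : ℝ)
    (h01 : l0 ≤ l1) (h12 : l1 ≤ l2) (h23 : l2 ≤ l3)
    (hsum : l0 + l1 + l2 + l3 = 1) (h0 : 0 ≤ l0)
    (hE : 0 < E) (hJ : 0 < J) (hα0 : 0 < |α|) (hα1 : |α| ≤ 1) :
    ∀ e0 e1 e2 e3 : ℝ,
      e0 ≤ e1 → e1 ≤ e2 → e2 ≤ e3 →
      ({e0, e1, e2, e3} : Multiset ℝ) =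
        {J, -J - 2 * α * J,
         α * J - Real.sqrt (8 * E ^ 2 + J ^ 2 * (α - 1) ^ 2),
         α * J + Real.sqrt (8 * E ^ 2 + J ^ 2 * (α - 1) ^ 2)} →
      4 * Real.sqrt 2 * E * (l3 - l0)
        ≤ 2 * Real.sqrt (8 * E ^ 2 + J ^ 2 * (α - 1) ^ 2) * (l3 - l0)
          + (e2 - e1) * (l2 - l1) := by
  intro e0 e1 e2 e3 _ h12' _ _
  have hl30 : 0 ≤ l3 - l0 := by linarith
  have hkey : 4 * Real.sqrt 2 * E ≤
      2 * Real.sqrt (8 * E ^ 2 + J ^ 2 * (α - 1) ^ 2) := by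
    have h1 : 4 * Real.sqrt 2 * E = 2 * Real.sqrt (8 * E ^ 2) := by
      rw [show (8 : ℝ) * E ^ 2 = 2 * (2 * E) ^ 2 by ring,
        Real.sqrt_mul (by norm_num), Real.sqrt_sq (by positivity)]
      ring
    rw [h1]
    gcongr
    nlinarith [sq_nonneg (J * (α - 1))]
  have h2 : 0 ≤ (e2 - e1) * (l2 - l1) :=
    mul_nonneg (by linarith) (by linarith)
  nlinarith [mul_le_mul_of_nonneg_right hkey hl30]
end

section
/- The battery capacity C(ρ;H) = Σ_{i=0}^{d−1} εᵢ(λᵢ − λ_{d−1−i}) is Schur-convex in the spectrum of ρ: if the ascending spectra λ of ρ and ξ of σ satisfy λ ≺ ξ (majorization), then C(ρ;H) ≤ C(σ;H), for any Hamiltonian with ascending eigenvalues ε₀ ≤ ... ≤ ε_{d−1}. -/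
lemma abel_aux (d : ℕ) (c D : ℕ → ℝ)
    (hc : ∀ i, i + 1 < d → c i ≤ c (i + 1))
    (hS : ∀ k, k < d → 0 ≤ ∑ i ∈ Finset.Ico k d, D i)
    (hS0 : ∑ i ∈ Finset.range d, D i = 0) :
    0 ≤ ∑ i ∈ Finset.range d, c i * D i := by
  set g : ℕ → ℝ := fun k => if k = 0 then c 0 else c k - c (k - 1) with hg
  have hcg : ∀ i, c i = ∑ k ∈ Finset.range (i + 1), g k := by
    intro i
    induction i with
    | zero => simp [hg]
    | succ n ih => rw [Finset.sum_range_succ, ← ih]; simp [hg]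
  have key : ∑ i ∈ Finset.range d, c i * D i
      = ∑ k ∈ Finset.range d, g k * ∑ i ∈ Finset.Ico k d, D i := by
    calc ∑ i ∈ Finset.range d, c i * D i
        = ∑ i ∈ Finset.Ico 0 d, ∑ k ∈ Finset.Ico 0 (i + 1), g k * D i := by
          rw [Finset.range_eq_Ico]
          refine Finset.sum_congr rfl fun i _ => ?_
          rw [← Finset.sum_mul, ← Finset.range_eq_Ico, ← hcg]
      _ = ∑ k ∈ Finset.Ico 0 d, ∑ i ∈ Finset.Ico k d, g k * D i := by
          rw [Finset.sum_Ico_Ico_comm]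
      _ = ∑ k ∈ Finset.range d, g k * ∑ i ∈ Finset.Ico k d, D i := by
          rw [Finset.range_eq_Ico]
          exact Finset.sum_congr rfl fun k _ => (Finset.mul_sum _ _ _).symm
  rw [key]
  refine Finset.sum_nonneg fun k hk => ?_
  rcases Nat.eq_zero_or_pos k with h0 | hpos
  · subst h0
    simp [hg, ← Finset.range_eq_Ico, hS0]
  · have hkd := Finset.mem_range.mp hk
    have hgk : 0 ≤ g k := by
      simp only [hg]
      rw [if_neg (by omega)]
      have h' := hc (k - 1) (by omega)
      rw [Nat.sub_add_cancel hpos] at h'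
      linarith
    exact mul_nonneg hgk (hS k hkd)

/-- Schur-convexity of the battery capacity: if the ascending spectrum `l` of `ρ` is
majorized by the ascending spectrum `x` of `σ` (for ascending sequences, all top
partial sums of `l` are dominated by those of `x`, with equal total sums), then
`C(ρ;H) = Σᵢ εᵢ(λᵢ − λ_{d−1−i}) ≤ C(σ;H)` for any ascending Hamiltonian spectrum `ε`. -/
theorem stmt_18
    (d : ℕ) (ε l x : Fin d → ℝ)
    (hε : Monotone ε) (hl : Monotone l) (hx : Monotone x)
    (hmaj : ∀ k : Fin d,
      ∑ i ∈ Finset.univ.filter (fun i => k ≤ i), l i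
        ≤ ∑ i ∈ Finset.univ.filter (fun i => k ≤ i), x i)
    (hsum : ∑ i, l i = ∑ i, x i) :
    ∑ i, ε i * (l i - l i.rev) ≤ ∑ i, ε i * (x i - x i.rev) := by
  have rev_reindex : ∀ f : Fin d → ℝ, ∑ i, ε i * f i.rev = ∑ i, ε i.rev * f i :=
    fun f => Fintype.sum_bijective Fin.rev Fin.rev_bijective _ _
      (fun i => by rw [Fin.rev_rev])
  have rl : ∑ i, ε i * (l i - l i.rev) = ∑ i, (ε i - ε i.rev) * l i := by
    simp only [mul_sub, sub_mul, Finset.sum_sub_distrib, rev_reindex l]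
  have rx : ∑ i, ε i * (x i - x i.rev) = ∑ i, (ε i - ε i.rev) * x i := by
    simp only [mul_sub, sub_mul, Finset.sum_sub_distrib, rev_reindex x]
  rw [rl, rx, ← sub_nonneg, ← Finset.sum_sub_distrib]
  have hform : ∀ i : Fin d, (ε i - ε i.rev) * x i - (ε i - ε i.rev) * l i
      = (ε i - ε i.rev) * (x i - l i) := fun i => by ring
  simp only [hform]
  set c : ℕ → ℝ := fun n => if h : n < d then ε ⟨n, h⟩ - ε (Fin.rev ⟨n, h⟩) else 0 with hc
  set D : ℕ → ℝ := fun n => if h : n < d then x ⟨n, h⟩ - l ⟨n, h⟩ else 0 with hD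
  have hfin : ∑ i : Fin d, (ε i - ε i.rev) * (x i - l i)
      = ∑ n ∈ Finset.range d, c n * D n := by
    rw [← Fin.sum_univ_eq_sum_range (fun n => c n * D n) d]
    refine Finset.sum_congr rfl fun i _ => ?_
    simp [hc, hD, i.isLt]
  rw [hfin]
  -- general conversion of filtered Fin sums to Ico sums
  have conv : ∀ (k : ℕ) (hk : k < d) (f : Fin d → ℝ),
      ∑ i ∈ Finset.univ.filter (fun i => (⟨k, hk⟩ : Fin d) ≤ i), f i
        = ∑ n ∈ Finset.Ico k d, (if h : n < d then f ⟨n, h⟩ else 0) := by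
    intro k hk f
    have hset : (Finset.range d).filter (fun n => k ≤ n) = Finset.Ico k d := by
      ext n; simp only [Finset.mem_filter, Finset.mem_range, Finset.mem_Ico]; omega
    rw [Finset.sum_filter, ← hset, Finset.sum_filter,
      ← Fin.sum_univ_eq_sum_range
        (fun n => if k ≤ n then (if h : n < d then f ⟨n, h⟩ else 0) else 0) d]
    refine Finset.sum_congr rfl fun i _ => ?_
    simp [Fin.le_def, i.isLt]
  refine abel_aux d c D ?_ ?_ ?_
  · intro i hi
    simp only [hc]
    rw [dif_pos (by omega : i < d), dif_pos hi]
    have h1 : (⟨i, by omega⟩ : Fin d) ≤ ⟨i + 1, hi⟩ := by simp [Fin.le_def]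
    have h2 : (⟨i + 1, hi⟩ : Fin d).rev ≤ (⟨i, by omega⟩ : Fin d).rev := by
      rw [Fin.rev_le_rev]; exact h1
    have := hε h1
    have := hε h2
    linarith
  · intro k hk
    have hmk := hmaj ⟨k, hk⟩
    rw [conv k hk l, conv k hk x] at hmk
    have hDsplit : ∑ i ∈ Finset.Ico k d, D i
        = (∑ n ∈ Finset.Ico k d, (if h : n < d then x ⟨n, h⟩ else 0))
          - ∑ n ∈ Finset.Ico k d, (if h : n < d then l ⟨n, h⟩ else 0) := by
      rw [← Finset.sum_sub_distrib]
      refine Finset.sum_congr rfl fun n hn => ?_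
      have hnd : n < d := (Finset.mem_Ico.mp hn).2
      simp [hD, hnd]
    rw [hDsplit]
    linarith
  · have hl' : ∑ n ∈ Finset.range d, D n = ∑ i : Fin d, (x i - l i) := by
      rw [← Fin.sum_univ_eq_sum_range (fun n => D n) d]
      refine Finset.sum_congr rfl fun i _ => ?_
      simp [hD, i.isLt]
    rw [hl', Finset.sum_sub_distrib, hsum, sub_self]
end

section
/- For any 4×4 Hermitian positive semidefinite matrix ρ with trace 1, C(ρ_A;H_A) + C(ρ_B;H_B) ≤ C(ρ;H₀) where H₀ = E(σ_z⊗I + I⊗σ_z), H_A = H_B = Eσ_z, E > 0: explicitly, 2E√(4|ρ₁₃+ρ₂₄|²+(ρ₁₁+ρ₂₂−ρ₃₃−ρ₄₄)²) + 2E√(4|ρ₁₂+ρ₃₄|²+(ρ₁₁+ρ₃₃−ρ₂₂−ρ₄₄)²) ≤ 4E(λ₃−λ₀), where λ₀ and λ₃ are the smallest and largest eigenvalues of ρ. -/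
open Matrix
open scoped ComplexOrder ComplexConjugate

/-!
The square roots are the eigenvalue gaps of the reduced states `ρ_A`, `ρ_B`. For every
orthonormal basis `(f_l)` of the other factor, `⟨u|ρ_A|u⟩ = ∑ l, ⟨u ⊗ f_l|ρ|u ⊗ f_l⟩`. Taking
eigenbases `u, u'` of `ρ_A` and `v, v'` of `ρ_B` (top and bottom), the four cross terms cancel and
`gap_A + gap_B = 2 (⟨u ⊗ v|ρ|u ⊗ v⟩ - ⟨u' ⊗ v'|ρ|u' ⊗ v'⟩)`, which the Rayleigh bounds
`λ_min ≤ ⟨x|ρ|x⟩ ≤ λ_max` turn into `2 (λ_max - λ_min)`.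
-/

section Rayleigh

open scoped MatrixOrder

variable {𝕜 n : Type*} [RCLike 𝕜] [Fintype n]

lemma Matrix.re_dotProduct_mulVec_le_of_le {A B : Matrix n n 𝕜} (h : A ≤ B) (x : n → 𝕜) :
    RCLike.re (star x ⬝ᵥ A *ᵥ x) ≤ RCLike.re (star x ⬝ᵥ B *ᵥ x) := by
  have := (le_iff.mp h).re_dotProduct_nonneg x
  rwa [sub_mulVec, dotProduct_sub, map_sub, sub_nonneg] at this

variable [DecidableEq n]

lemma Matrix.re_dotProduct_algebraMap_mulVec {x : n → 𝕜} (hx : star x ⬝ᵥ x = 1) (c : ℝ) :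
    RCLike.re (star x ⬝ᵥ algebraMap ℝ (Matrix n n 𝕜) c *ᵥ x) = c := by
  simp [Algebra.algebraMap_eq_smul_one, smul_mulVec, hx, RCLike.smul_re]

namespace Matrix.IsHermitian

variable {A : Matrix n n 𝕜}

lemma re_dotProduct_mulVec_eigenvectorUnitary_col (hA : A.IsHermitian) (k : n) :
    RCLike.re (star (hA.eigenvectorUnitary · k) ⬝ᵥ A *ᵥ (hA.eigenvectorUnitary · k)) =
      hA.eigenvalues k :=
  (hA.eigenvalues_eq k).symm

lemma iInf_eigenvalues_le_re_dotProduct_mulVec (hA : A.IsHermitian) {x : n → 𝕜}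
    (hx : star x ⬝ᵥ x = 1) : (⨅ i, hA.eigenvalues i) ≤ RCLike.re (star x ⬝ᵥ A *ᵥ x) := by
  have hle : algebraMap ℝ _ (⨅ i, hA.eigenvalues i) ≤ A := by
    rw [algebraMap_le_iff_le_spectrum (ha := hA.isSelfAdjoint),
      hA.spectrum_real_eq_range_eigenvalues]
    rintro _ ⟨i, rfl⟩
    exact ciInf_le (Set.finite_range _).bddBelow i
  simpa [re_dotProduct_algebraMap_mulVec hx] using re_dotProduct_mulVec_le_of_le hle x

lemma re_dotProduct_mulVec_le_iSup_eigenvalues (hA : A.IsHermitian) {x : n → 𝕜}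
    (hx : star x ⬝ᵥ x = 1) : RCLike.re (star x ⬝ᵥ A *ᵥ x) ≤ ⨆ i, hA.eigenvalues i := by
  have hle : A ≤ algebraMap ℝ _ (⨆ i, hA.eigenvalues i) := by
    rw [le_algebraMap_iff_spectrum_le (ha := hA.isSelfAdjoint),
      hA.spectrum_real_eq_range_eigenvalues]
    rintro _ ⟨i, rfl⟩
    exact le_ciSup (Set.finite_range _).bddAbove i
  simpa [re_dotProduct_algebraMap_mulVec hx] using re_dotProduct_mulVec_le_of_le hle x

end Matrix.IsHermitian

end Rayleigh

section PartialTrace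

variable {R ι κ m n : Type*} [CommRing R] [StarRing R] [Fintype ι] [Fintype κ]

namespace Matrix

def traceRight [Fintype n] (ρ : Matrix (m × n) (m × n) R) : Matrix m m R :=
  of fun i i' => ∑ j, ρ (i, j) (i', j)

lemma IsHermitian.traceRight [Fintype n] {ρ : Matrix (m × n) (m × n) R} (hρ : ρ.IsHermitian) :
    ρ.traceRight.IsHermitian := by
  ext i i'
  simp [Matrix.traceRight, conjTranspose_apply, star_sum, hρ.apply]

def traceLeft [Fintype m] (ρ : Matrix (m × n) (m × n) R) : Matrix n n R :=
  of fun j j' => ∑ i, ρ (i, j) (i, j')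

lemma IsHermitian.traceLeft [Fintype m] {ρ : Matrix (m × n) (m × n) R} (hρ : ρ.IsHermitian) :
    ρ.traceLeft.IsHermitian :=
  (hρ.submatrix (Equiv.prodComm n m)).traceRight

variable [Fintype m] [Fintype n]

def kroneckerVec (u : m → R) (v : n → R) : m × n → R := fun p => u p.1 * v p.2

lemma star_dotProduct_mulVec_eq_sum (A : Matrix ι ι R) (x : ι → R) :
    star x ⬝ᵥ A *ᵥ x = ∑ p, ∑ q, star (x p) * A p q * x q := by
  simp [dotProduct, mulVec, Finset.mul_sum, mul_assoc]

lemma star_comp_equiv_symm_dotProduct (x : ι → R) (e : ι ≃ κ) :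
    star (x ∘ e.symm) ⬝ᵥ x ∘ e.symm = star x ⬝ᵥ x :=
  e.symm.sum_comp fun i => star (x i) * x i

lemma star_dotProduct_submatrix_mulVec_equiv (A : Matrix κ κ R) (e : ι ≃ κ) (x : ι → R) :
    star x ⬝ᵥ A.submatrix e e *ᵥ x = star (x ∘ e.symm) ⬝ᵥ A *ᵥ (x ∘ e.symm) := by
  rw [submatrix_mulVec_equiv, ← comp_equiv_symm_dotProduct]
  rfl

lemma star_kroneckerVec_dotProduct (u u' : m → R) (v v' : n → R) :
    star (kroneckerVec u v) ⬝ᵥ kroneckerVec u' v' = (star u ⬝ᵥ u') * (star v ⬝ᵥ v') := by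
  simp only [dotProduct, kroneckerVec, Fintype.sum_prod_type, Finset.sum_mul_sum, Pi.star_apply,
    star_mul']
  refine Finset.sum_congr rfl fun i _ => Finset.sum_congr rfl fun j _ => ?_
  ring

lemma star_col_dotProduct_col [DecidableEq n] {U : Matrix n n R} (hU : U ∈ unitaryGroup n R)
    (k : n) : star (U · k) ⬝ᵥ (U · k) = 1 := by
  simpa [mul_apply, dotProduct] using congrFun₂ (mem_unitaryGroup_iff'.mp hU) k k

lemma sum_star_mul_eq_one_apply [DecidableEq n] {U : Matrix n n R} (hU : U ∈ unitaryGroup n R)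
    (j j' : n) : ∑ k, star (U j k) * U j' k = (1 : Matrix n n R) j' j := by
  simp [← mem_unitaryGroup_iff.mp hU, mul_apply, mul_comm]

lemma sum_dotProduct_mulVec_kroneckerVec_col_right [DecidableEq n] (ρ : Matrix (m × n) (m × n) R)
    (w : m → R) {U : Matrix n n R} (hU : U ∈ unitaryGroup n R) :
    ∑ k, star (kroneckerVec w (U · k)) ⬝ᵥ ρ *ᵥ kroneckerVec w (U · k) =
      star w ⬝ᵥ ρ.traceRight *ᵥ w := by
  calc _ = ∑ p, ∑ q, star (w p.1) * ρ p q * w q.1 * ∑ k, star (U p.2 k) * U q.2 k := by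
        simp only [star_dotProduct_mulVec_eq_sum, kroneckerVec, Finset.mul_sum]
        rw [Finset.sum_comm]
        refine Finset.sum_congr rfl fun p _ => ?_
        rw [Finset.sum_comm]
        refine Finset.sum_congr rfl fun q _ => Finset.sum_congr rfl fun k _ => ?_
        simp only [star_mul']
        ring
    _ = _ := by
        simp only [sum_star_mul_eq_one_apply hU, one_apply, mul_ite, mul_one, mul_zero,
          star_dotProduct_mulVec_eq_sum, Matrix.traceRight, of_apply, Fintype.sum_prod_type,
          Finset.mul_sum, Finset.sum_mul, Finset.sum_ite_eq', Finset.mem_univ, if_true]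
        exact Finset.sum_congr rfl fun i _ => Finset.sum_comm

lemma sum_dotProduct_mulVec_kroneckerVec_col_left [DecidableEq m] (ρ : Matrix (m × n) (m × n) R)
    (w : n → R) {U : Matrix m m R} (hU : U ∈ unitaryGroup m R) :
    ∑ k, star (kroneckerVec (U · k) w) ⬝ᵥ ρ *ᵥ kroneckerVec (U · k) w =
      star w ⬝ᵥ ρ.traceLeft *ᵥ w := by
  have hswap (u : m → R) : kroneckerVec w u ∘ (Equiv.prodComm n m).symm = kroneckerVec u w :=
    funext fun _ => mul_comm _ _
  simp_rw [← hswap, ← star_dotProduct_submatrix_mulVec_equiv]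
  exact sum_dotProduct_mulVec_kroneckerVec_col_right _ w hU

end Matrix

end PartialTrace

lemma Fin.sum_univ_two_of_ne {M : Type*} [AddCommMonoid M] (f : Fin 2 → M) {k k' : Fin 2}
    (h : k ≠ k') : ∑ i, f i = f k + f k' := by
  fin_cases k <;> fin_cases k' <;> simp_all [Fin.sum_univ_two, add_comm]

lemma Fin.exists_ne_sub_eq_abs_sub (f : Fin 2 → ℝ) : ∃ k k', k ≠ k' ∧ f k - f k' = |f 0 - f 1| := by
  rcases le_total (f 1) (f 0) with h | h
  · exact ⟨0, 1, by decide, (abs_of_nonneg (sub_nonneg.mpr h)).symm⟩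
  · exact ⟨1, 0, by decide, by rw [abs_of_nonpos (sub_nonpos.mpr h)]; ring⟩

lemma Matrix.IsHermitian.abs_eigenvalues_sub_fin_two {M : Matrix (Fin 2) (Fin 2) ℂ}
    (hM : M.IsHermitian) :
    |hM.eigenvalues 0 - hM.eigenvalues 1| =
      √(4 * ‖M 0 1‖ ^ 2 + ((M 0 0).re - (M 1 1).re) ^ 2) := by
  rw [← Real.sqrt_sq_eq_abs]
  congr 1
  have htr := hM.trace_eq_sum_eigenvalues
  have hdet := hM.det_eq_prod_eigenvalues
  rw [trace_fin_two, Fin.sum_univ_two] at htr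
  rw [det_fin_two, Fin.prod_univ_two] at hdet
  have h10 : M 1 0 = conj (M 0 1) := (hM.apply 1 0).symm
  have h00 : M 0 0 = (M 0 0).re := (hM.coe_re_apply_self 0).symm
  have h11 : M 1 1 = (M 1 1).re := (hM.coe_re_apply_self 1).symm
  apply Complex.ofReal_injective
  push_cast
  rw [← Complex.mul_conj', ← h00, ← h11, ← h10]
  linear_combination (-(M 0 0 + M 1 1 + hM.eigenvalues 0 + hM.eigenvalues 1)) * htr + 4 * hdet

section TwoQubits

variable {𝕜 : Type*} [RCLike 𝕜]

lemma Matrix.traceRight_gap_add_traceLeft_gap_eq (σ : Matrix (Fin 2 × Fin 2) (Fin 2 × Fin 2) 𝕜)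
    {U V : Matrix (Fin 2) (Fin 2) 𝕜} (hU : U ∈ unitaryGroup (Fin 2) 𝕜)
    (hV : V ∈ unitaryGroup (Fin 2) 𝕜) {k k' l l' : Fin 2} (hk : k ≠ k') (hl : l ≠ l') :
    star (U · k) ⬝ᵥ σ.traceRight *ᵥ (U · k) - star (U · k') ⬝ᵥ σ.traceRight *ᵥ (U · k') +
        (star (V · l) ⬝ᵥ σ.traceLeft *ᵥ (V · l) - star (V · l') ⬝ᵥ σ.traceLeft *ᵥ (V · l')) =
      2 * (star (kroneckerVec (U · k) (V · l)) ⬝ᵥ σ *ᵥ kroneckerVec (U · k) (V · l) -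
        star (kroneckerVec (U · k') (V · l')) ⬝ᵥ σ *ᵥ kroneckerVec (U · k') (V · l')) := by
  have hA (k : Fin 2) : star (U · k) ⬝ᵥ σ.traceRight *ᵥ (U · k) =
      star (kroneckerVec (U · k) (V · l)) ⬝ᵥ σ *ᵥ kroneckerVec (U · k) (V · l) +
        star (kroneckerVec (U · k) (V · l')) ⬝ᵥ σ *ᵥ kroneckerVec (U · k) (V · l') := by
    rw [← sum_dotProduct_mulVec_kroneckerVec_col_right σ _ hV, Fin.sum_univ_two_of_ne _ hl]
  have hB (l : Fin 2) : star (V · l) ⬝ᵥ σ.traceLeft *ᵥ (V · l) =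
      star (kroneckerVec (U · k) (V · l)) ⬝ᵥ σ *ᵥ kroneckerVec (U · k) (V · l) +
        star (kroneckerVec (U · k') (V · l)) ⬝ᵥ σ *ᵥ kroneckerVec (U · k') (V · l) := by
    rw [← sum_dotProduct_mulVec_kroneckerVec_col_left σ _ hU, Fin.sum_univ_two_of_ne _ hk]
  rw [hA k, hA k', hB l, hB l']
  ring

lemma Matrix.IsHermitian.exists_eigenvalue_gaps_add_eq_two_mul_sub
    {σ : Matrix (Fin 2 × Fin 2) (Fin 2 × Fin 2) 𝕜} (hσ : σ.IsHermitian) :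
    ∃ x y : Fin 2 × Fin 2 → 𝕜, star x ⬝ᵥ x = 1 ∧ star y ⬝ᵥ y = 1 ∧
      |hσ.traceRight.eigenvalues 0 - hσ.traceRight.eigenvalues 1| +
          |hσ.traceLeft.eigenvalues 0 - hσ.traceLeft.eigenvalues 1| =
        2 * (RCLike.re (star x ⬝ᵥ σ *ᵥ x) - RCLike.re (star y ⬝ᵥ σ *ᵥ y)) := by
  obtain ⟨k, k', hk, hgapA⟩ := Fin.exists_ne_sub_eq_abs_sub hσ.traceRight.eigenvalues
  obtain ⟨l, l', hl, hgapB⟩ := Fin.exists_ne_sub_eq_abs_sub hσ.traceLeft.eigenvalues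
  rw [← hgapA, ← hgapB]
  simp only [← re_dotProduct_mulVec_eigenvectorUnitary_col]
  set U := hσ.traceRight.eigenvectorUnitary
  set V := hσ.traceLeft.eigenvectorUnitary
  have hunit (k l : Fin 2) :
      star (kroneckerVec (U · k) (V · l)) ⬝ᵥ kroneckerVec (U · k) (V · l) = 1 := by
    rw [star_kroneckerVec_dotProduct, star_col_dotProduct_col U.2, star_col_dotProduct_col V.2,
      mul_one]
  refine ⟨_, _, hunit k l, hunit k' l', ?_⟩
  have h := congrArg RCLike.re (traceRight_gap_add_traceLeft_gap_eq σ U.2 V.2 hk hl)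
  simp only [map_add, map_sub, RCLike.ofNat_mul_re] at h
  exact h

end TwoQubits

theorem stmt_19_general
    (ρ : Matrix (Fin 4) (Fin 4) ℂ)
    (hρ : ρ.IsHermitian)
    (E : ℝ) (hE : 0 < E) :
    2 * E * Real.sqrt (4 * ‖ρ 0 2 + ρ 1 3‖ ^ 2 +
        ((ρ 0 0).re + (ρ 1 1).re - (ρ 2 2).re - (ρ 3 3).re) ^ 2)
    + 2 * E * Real.sqrt (4 * ‖ρ 0 1 + ρ 2 3‖ ^ 2 +
        ((ρ 0 0).re + (ρ 2 2).re - (ρ 1 1).re - (ρ 3 3).re) ^ 2)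
      ≤ 4 * E * ((⨆ i, hρ.eigenvalues i) - ⨅ i, hρ.eigenvalues i) := by
  -- `(i, j) ↦ 2 * i + j`: the first factor is the high bit of the `Fin 4` index.
  set e : Fin 2 × Fin 2 ≃ Fin 4 := finProdFinEquiv
  have hσ := hρ.submatrix e
  have hgapA : |hσ.traceRight.eigenvalues 0 - hσ.traceRight.eigenvalues 1| =
      √(4 * ‖ρ 0 2 + ρ 1 3‖ ^ 2 + ((ρ 0 0).re + (ρ 1 1).re - (ρ 2 2).re - (ρ 3 3).re) ^ 2) := by
    rw [hσ.traceRight.abs_eigenvalues_sub_fin_two]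
    simp [traceRight, Fin.sum_univ_two, e, finProdFinEquiv, sub_add_eq_sub_sub]
  have hgapB : |hσ.traceLeft.eigenvalues 0 - hσ.traceLeft.eigenvalues 1| =
      √(4 * ‖ρ 0 1 + ρ 2 3‖ ^ 2 + ((ρ 0 0).re + (ρ 2 2).re - (ρ 1 1).re - (ρ 3 3).re) ^ 2) := by
    rw [hσ.traceLeft.abs_eigenvalues_sub_fin_two]
    simp [traceLeft, Fin.sum_univ_two, e, finProdFinEquiv, sub_add_eq_sub_sub]
  obtain ⟨x, y, hx, hy, hgap⟩ := hσ.exists_eigenvalue_gaps_add_eq_two_mul_sub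
  rw [hgapA, hgapB, star_dotProduct_submatrix_mulVec_equiv,
    star_dotProduct_submatrix_mulVec_equiv] at hgap
  have hmax := hρ.re_dotProduct_mulVec_le_iSup_eigenvalues
    ((star_comp_equiv_symm_dotProduct x e).trans hx)
  have hmin := hρ.iInf_eigenvalues_le_re_dotProduct_mulVec
    ((star_comp_equiv_symm_dotProduct y e).trans hy)
  calc _ = 4 * E * (RCLike.re (star (x ∘ e.symm) ⬝ᵥ ρ *ᵥ (x ∘ e.symm)) -
        RCLike.re (star (y ∘ e.symm) ⬝ᵥ ρ *ᵥ (y ∘ e.symm))) := by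
        linear_combination 2 * E * hgap
    _ ≤ _ := mul_le_mul_of_nonneg_left (by linarith) (by linarith)

/-- Trade-off for the longitudinal non-interacting field: the sum of the explicit
subsystem capacities is bounded by the total capacity `4E(λ₃−λ₀)`. -/
theorem stmt_19
    (ρ : Matrix (Fin 4) (Fin 4) ℂ)
    (hρ : ρ.IsHermitian) (hpos : ρ.PosSemidef) (htr : ρ.trace = 1)
    (E : ℝ) (hE : 0 < E) :
    2 * E * Real.sqrt (4 * ‖ρ 0 2 + ρ 1 3‖ ^ 2 +
        ((ρ 0 0).re + (ρ 1 1).re - (ρ 2 2).re - (ρ 3 3).re) ^ 2)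
    + 2 * E * Real.sqrt (4 * ‖ρ 0 1 + ρ 2 3‖ ^ 2 +
        ((ρ 0 0).re + (ρ 2 2).re - (ρ 1 1).re - (ρ 3 3).re) ^ 2)
      ≤ 4 * E * ((⨆ i, hρ.eigenvalues i) - ⨅ i, hρ.eigenvalues i) :=
  stmt_19_general ρ hρ E hE
end
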